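/- Let μ_1, …, μ_k be a sequence of roots of the root pairing (in the paper, simple roots; repetitions allowed), and let λ ∈ M be a weight. For ε ∈ {0,1}^k set R^{λ,ε} = T_{μ_1}^{ε_1} ∘ T_{μ_2}^{ε_2} ∘ ⋯ ∘ T_{μ_k}^{ε_k}(e^λ) ∈ ℤ[M] (so T_{μ_k}^{ε_k} is applied first). Then e^λ = ∑_{ε ∈ {0,1}^k} R^{λ,ε} · ∏_{1 ≤ i ≤ k, ε_i = 0} (1 − e^{−μ_i}). -/

import Mathlib

/-!
On a basis element, `T_β^0(e^λ) · (1 - e^{-β})` telescopes to `e^λ - e^{s_β λ}`, so every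
`x ∈ ℤ[M]` satisfies the Demazure identity `x = T_β^1 x + T_β^0 x · (1 - e^{-β})`. Applying it to
the outermost operator `T_{μ_1}` splits the sum over `ε` according to `ε_1`, and induction on `k`
gives the expansion.
-/

/-- The basis element `e^λ` of the group algebra `ℤ[M]`. -/
noncomputable def expWeight {M : Type*} [AddCommGroup M] (lam : M) :
    AddMonoidAlgebra ℤ M :=
  AddMonoidAlgebra.single lam 1

/-- The value of the Demazure operator `T_β^0` on the basis element `e^λ`,
for the root `β = P.root i`. -/
noncomputable def demazureTerm {ι M N : Type*} [AddCommGroup M] [AddCommGroup N]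
    (P : RootPairing ι ℤ M N) (i : ι) (lam : M) : AddMonoidAlgebra ℤ M :=
  if 0 < P.coroot' i lam then
    ∑ j ∈ Finset.range (P.coroot' i lam).toNat, expWeight (lam - (j : ℤ) • P.root i)
  else if P.coroot' i lam < 0 then
    -∑ j ∈ Finset.Icc 1 (-(P.coroot' i lam)).toNat, expWeight (lam + (j : ℤ) • P.root i)
  else 0

/-- The Demazure operator `T_β^0 : ℤ[M] → ℤ[M]` for the root `β = P.root i`. -/
noncomputable def TZero {ι M N : Type*} [AddCommGroup M] [AddCommGroup N]
    (P : RootPairing ι ℤ M N) (i : ι) :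
    AddMonoidAlgebra ℤ M →ₗ[ℤ] AddMonoidAlgebra ℤ M :=
  Finsupp.lift (AddMonoidAlgebra ℤ M) ℤ M (demazureTerm P i) ∘ₗ
    (AddMonoidAlgebra.coeffLinearEquiv ℤ : AddMonoidAlgebra ℤ M ≃ₗ[ℤ] (M →₀ ℤ)).toLinearMap

/-- The operator `T_β^1 : ℤ[M] → ℤ[M]`, `e^λ ↦ e^{s_β λ}`, for the root `β = P.root i`. -/
noncomputable def TOne {ι M N : Type*} [AddCommGroup M] [AddCommGroup N]
    (P : RootPairing ι ℤ M N) (i : ι) :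
    AddMonoidAlgebra ℤ M →ₗ[ℤ] AddMonoidAlgebra ℤ M :=
  Finsupp.lift (AddMonoidAlgebra ℤ M) ℤ M (fun lam => expWeight (P.reflection i lam)) ∘ₗ
    (AddMonoidAlgebra.coeffLinearEquiv ℤ : AddMonoidAlgebra ℤ M ≃ₗ[ℤ] (M →₀ ℤ)).toLinearMap

/-- `T_β^ε`: the operator `T_β^1` if `ε = 1` (`true`) and the Demazure operator `T_β^0`
if `ε = 0` (`false`). -/
noncomputable def Tsel {ι M N : Type*} [AddCommGroup M] [AddCommGroup N]
    (P : RootPairing ι ℤ M N) (i : ι) :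
    Bool → (AddMonoidAlgebra ℤ M →ₗ[ℤ] AddMonoidAlgebra ℤ M)
  | true => TOne P i
  | false => TZero P i

/-- The coefficient `R^{λ,ε}_{μ_1,…,μ_k} = T_{μ_1}^{ε_1} ∘ ⋯ ∘ T_{μ_k}^{ε_k} (e^λ)`
(the operator `T_{μ_k}^{ε_k}` is applied first). -/
noncomputable def Rcoef {ι M N : Type*} [AddCommGroup M] [AddCommGroup N]
    (P : RootPairing ι ℤ M N) {k : ℕ} (μ : Fin k → ι) (ε : Fin k → Bool) (lam : M) :
    AddMonoidAlgebra ℤ M :=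
  ((List.finRange k).map fun j => Tsel P (μ j) (ε j)).foldr (fun T x => T x)
    (expWeight lam)

section GroupAlgebra

variable {M : Type*} [AddCommGroup M]

lemma expWeight_mul (a b : M) : expWeight a * expWeight b = expWeight (a + b) := by
  simp [expWeight, AddMonoidAlgebra.single_mul_single]

lemma expWeight_mul_one_sub_expWeight_neg (a β : M) :
    expWeight a * (1 - expWeight (-β)) = expWeight a - expWeight (a - β) := by
  rw [mul_sub, mul_one, expWeight_mul, ← sub_eq_add_neg]

lemma sum_range_expWeight_sub_mul_one_sub (lam β : M) (n : ℕ) :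
    (∑ j ∈ Finset.range n, expWeight (lam - (j : ℤ) • β)) * (1 - expWeight (-β))
      = expWeight lam - expWeight (lam - (n : ℤ) • β) := by
  induction n with
  | zero => simp
  | succ n ih =>
    rw [Finset.sum_range_succ, add_mul, ih, expWeight_mul_one_sub_expWeight_neg]
    push_cast
    rw [add_smul, one_smul, sub_add_eq_sub_sub]
    abel

lemma sum_Icc_expWeight_add_mul_one_sub (lam β : M) (n : ℕ) :
    (∑ j ∈ Finset.Icc 1 n, expWeight (lam + (j : ℤ) • β)) * (1 - expWeight (-β))
      = expWeight (lam + (n : ℤ) • β) - expWeight lam := by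
  induction n with
  | zero => simp
  | succ n ih =>
    rw [Finset.sum_Icc_succ_top (by omega), add_mul, ih,
      expWeight_mul_one_sub_expWeight_neg]
    push_cast
    rw [add_smul, one_smul, ← add_assoc, add_sub_cancel_right]
    abel

lemma lift_coeffLinearEquiv_expWeight (f : M → AddMonoidAlgebra ℤ M) (lam : M) :
    Finsupp.lift (AddMonoidAlgebra ℤ M) ℤ M f
      (AddMonoidAlgebra.coeffLinearEquiv ℤ (expWeight lam)) = f lam := by
  rw [AddMonoidAlgebra.coeffLinearEquiv_apply, expWeight, AddMonoidAlgebra.coeff_single,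
    Finsupp.lift_apply, Finsupp.sum_single_index] <;> simp

end GroupAlgebra

section Demazure

variable {ι M N : Type*} [AddCommGroup M] [AddCommGroup N] (P : RootPairing ι ℤ M N) (i : ι)

lemma TOne_expWeight (lam : M) : TOne P i (expWeight lam) = expWeight (P.reflection i lam) :=
  lift_coeffLinearEquiv_expWeight _ lam

lemma TZero_expWeight (lam : M) : TZero P i (expWeight lam) = demazureTerm P i lam :=
  lift_coeffLinearEquiv_expWeight _ lam

lemma demazureTerm_mul_one_sub (lam : M) :
    demazureTerm P i lam * (1 - expWeight (-P.root i))
      = expWeight lam - expWeight (P.reflection i lam) := by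
  rw [P.reflection_apply, demazureTerm]
  rcases lt_trichotomy (P.coroot' i lam) 0 with hneg | hzero | hpos
  · rw [if_neg hneg.not_gt, if_pos hneg, neg_mul, sum_Icc_expWeight_add_mul_one_sub,
      Int.toNat_of_nonneg (by omega), neg_smul, ← sub_eq_add_neg, neg_sub]
  · simp [hzero]
  · rw [if_pos hpos, sum_range_expWeight_sub_mul_one_sub, Int.toNat_of_nonneg hpos.le]

lemma TOne_add_TZero_mul_one_sub (x : AddMonoidAlgebra ℤ M) :
    TOne P i x + TZero P i x * (1 - expWeight (-P.root i)) = x := by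
  induction x using AddMonoidAlgebra.induction_linear with
  | zero => simp
  | add x y hx hy =>
    rw [map_add, map_add, add_mul, add_add_add_comm, hx, hy]
  | single lam c =>
    have hsingle : AddMonoidAlgebra.single lam c = c • expWeight lam := by
      simp [expWeight, AddMonoidAlgebra.smul_single]
    rw [hsingle, map_smul, map_smul, smul_mul_assoc, ← smul_add, TOne_expWeight,
      TZero_expWeight, demazureTerm_mul_one_sub, add_sub_cancel]

lemma Rcoef_cons {k : ℕ} (μ : Fin (k + 1) → ι) (b : Bool) (ε : Fin k → Bool) (lam : M) :
    Rcoef P μ (Fin.cons b ε) lam = Tsel P (μ 0) b (Rcoef P (Fin.tail μ) ε lam) := by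
  simp [Rcoef, List.finRange_succ, Function.comp_def, Fin.tail]

end Demazure

lemma Fintype.sum_fin_succ_pi_bool {A : Type*} [AddCommMonoid A] {k : ℕ}
    (f : (Fin (k + 1) → Bool) → A) :
    ∑ ε, f ε = ∑ ε : Fin k → Bool, (f (Fin.cons true ε) + f (Fin.cons false ε)) := by
  rw [← Fintype.sum_equiv (Fin.consEquiv fun _ => Bool) _ _ fun _ => rfl,
    Fintype.sum_prod_type, Fintype.sum_bool, Finset.sum_add_distrib]
  rfl

lemma Fin.prod_filter_cons_eq_false {R : Type*} [CommMonoid R] {k : ℕ} (b : Bool)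
    (ε : Fin k → Bool) (g : Fin (k + 1) → R) :
    ∏ i ∈ Finset.univ.filter (fun i => (Fin.cons b ε : Fin (k + 1) → Bool) i = false), g i
      = (if b = false then g 0 else 1)
        * ∏ i ∈ Finset.univ.filter (fun i => ε i = false), g i.succ := by
  simp [Finset.prod_filter, Fin.prod_univ_succ]

theorem bott_samelson_line_bundle_restriction_at_zero_general
    {ι M N : Type*} [AddCommGroup M]
    [AddCommGroup N] (P : RootPairing ι ℤ M N)
    (k : ℕ) (μ : Fin k → ι) (lam : M) :
    expWeight lam
      = ∑ ε : Fin k → Bool,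
          Rcoef P μ ε lam
            * ∏ i ∈ Finset.univ.filter (fun i : Fin k => ε i = false),
                (1 - expWeight (-(P.root (μ i)))) := by
  induction k with
  | zero => simp [Rcoef]
  | succ k ih =>
    rw [ih (Fin.tail μ), Fintype.sum_fin_succ_pi_bool]
    refine Finset.sum_congr rfl fun ε _ => ?_
    rw [Rcoef_cons, Rcoef_cons, Fin.prod_filter_cons_eq_false, Fin.prod_filter_cons_eq_false,
      Tsel, Tsel, if_neg Bool.true_eq_false.mp, if_pos rfl, one_mul, ← mul_assoc, ← add_mul,
      TOne_add_TZero_mul_one_sub]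
    rfl

/-- `e^λ = ∑_{ε ∈ {0,1}^k} R^{λ,ε} ∏_{ε_i = 0} (1 - e^{-μ_i})` — the
restriction at the fixed point `(0,…,0)` of the decomposition of the line bundle `L_λ`
on the Bott–Samelson variety `Γ(μ_1,…,μ_k)`. -/
theorem bott_samelson_line_bundle_restriction_at_zero
    {ι M N : Type*} [AddCommGroup M] [Module.Free ℤ M] [Module.Finite ℤ M]
    [AddCommGroup N] (P : RootPairing ι ℤ M N)
    (k : ℕ) (μ : Fin k → ι) (lam : M) :
    expWeight lam
      = ∑ ε : Fin k → Bool,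
          Rcoef P μ ε lam
            * ∏ i ∈ Finset.univ.filter (fun i : Fin k => ε i = false),
                (1 - expWeight (-(P.root (μ i)))) :=
  bott_samelson_line_bundle_restriction_at_zero_general P k μ lam
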